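/- arXiv:2310.08794 — 7 statements merged into one kernel-verified Lean document; each statement's English description precedes it below -/
import Mathlib

section
/- (Bifurcated market) Suppose δ_A ≥ δ_B, δ_A + δ_B ≥ 1, and δ_A − δ_B < 1, and let τ = (1 + δ_A − δ_B)/2. Then τ ∈ [1/2, 1), and for every x ∈ [0,1]: if x ≤ τ then δ_A − x ≥ δ_B − (1 − x) and δ_A − x ≥ 0 (station A is optimal), and if x ≥ τ then δ_B − (1 − x) ≥ δ_A − x and δ_B − (1 − x) ≥ 0 (station B is optimal). Hence station A serves exactly the segment [0, τ] and station B serves exactly [τ, 1]. -/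
/-- Bifurcated market: If δ_A ≥ δ_B, δ_A + δ_B ≥ 1 and δ_A − δ_B < 1,
with τ = (1 + δ_A − δ_B)/2, then τ ∈ [1/2, 1), and every x ∈ [0,1] with x ≤ τ finds
station A optimal, while every x ∈ [0,1] with x ≥ τ finds station B optimal:
station A serves [0, τ] and station B serves [τ, 1]. -/
theorem stmt_3 (wl wp qA qB pA pB : ℝ)
    (hwl : 0 < wl) (hwp : 0 < wp) (hqA : 0 ≤ qA) (hqB : 0 ≤ qB)
    (δA δB τ : ℝ)
    (hδA : δA = wl * qA - wp * pA) (hδB : δB = wl * qB - wp * pB)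
    (hτ : τ = (1 + δA - δB) / 2)
    (hAB : δA ≥ δB) (hsum : δA + δB ≥ 1) (hdiff : δA - δB < 1) :
    (1 / 2 ≤ τ ∧ τ < 1) ∧
    (∀ x : ℝ, 0 ≤ x → x ≤ 1 →
      (x ≤ τ → δA - x ≥ δB - (1 - x) ∧ δA - x ≥ 0) ∧
      (τ ≤ x → δB - (1 - x) ≥ δA - x ∧ δB - (1 - x) ≥ 0)) := by
  constructor
  · constructor <;> [linarith [hτ]; linarith [hτ]]
  · intro x hx0 hx1
    constructor
    · intro hxτ
      constructor <;> nlinarith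
    · intro hτx
      constructor <;> nlinarith
end

section
/- (Pricing equilibrium, segmented regime) Suppose Δ_A + Δ_B ≤ 2, Δ_A > 0 and Δ_B > 0. Define p*_i = (w_p·o_i + w_l·q_i)/(2·w_p) for i ∈ {A, B}. Then (p*_A, p*_B) is a Nash equilibrium of the pricing game: for every p ≥ o_A, (p*_A − o_A)·σ_A(p*_A, p*_B) ≥ (p − o_A)·σ_A(p, p*_B), and for every p ≥ o_B, (p*_B − o_B)·σ_B(p*_A, p*_B) ≥ (p − o_B)·σ_B(p*_A, p). -/
open MeasureTheory

/-- Station A's market share at prices (p_A, p_B): the Lebesgue measure of the set of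
types x ∈ [0,1] for which δ_A − x ≥ 0 and δ_A − x ≥ δ_B − (1 − x),
where δ_i = w_l·q_i − w_p·p_i. -/
noncomputable def sigmaA (wl wp qA qB pA pB : ℝ) : ℝ :=
  (volume {x : ℝ | x ∈ Set.Icc (0 : ℝ) 1 ∧
    (wl * qA - wp * pA) - x ≥ 0 ∧
    (wl * qA - wp * pA) - x ≥ (wl * qB - wp * pB) - (1 - x)}).toReal

/-- Station B's market share at prices (p_A, p_B): the Lebesgue measure of the set of
types x ∈ [0,1] for which δ_B − (1 − x) ≥ 0 and δ_B − (1 − x) > δ_A − x. -/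
noncomputable def sigmaB (wl wp qA qB pA pB : ℝ) : ℝ :=
  (volume {x : ℝ | x ∈ Set.Icc (0 : ℝ) 1 ∧
    (wl * qB - wp * pB) - (1 - x) ≥ 0 ∧
    (wl * qB - wp * pB) - (1 - x) > (wl * qA - wp * pA) - x}).toReal

lemma vol_toReal_le {S : Set ℝ} {a b : ℝ} (h : S ⊆ Set.Icc a b) :
    (volume S).toReal ≤ max 0 (b - a) := by
  have h1 : volume S ≤ ENNReal.ofReal (max 0 (b - a)) := by
    calc volume S ≤ volume (Set.Icc a b) := measure_mono h
      _ = ENNReal.ofReal (b - a) := Real.volume_Icc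
      _ ≤ ENNReal.ofReal (max 0 (b - a)) := ENNReal.ofReal_le_ofReal (le_max_right _ _)
  have h2 := ENNReal.toReal_mono ENNReal.ofReal_ne_top h1
  rwa [ENNReal.toReal_ofReal (le_max_left _ _)] at h2

/-- Pricing equilibrium, segmented regime: if Δ_A + Δ_B ≤ 2, Δ_A > 0 and
Δ_B > 0, then the prices p*_i = (w_p·o_i + w_l·q_i)/(2 w_p) form a Nash equilibrium of
the pricing game. -/
theorem stmt_9 (wl wp qA qB oA oB : ℝ)
    (hwl : 0 < wl) (hwp : 0 < wp) (hqA : 0 ≤ qA) (hqB : 0 ≤ qB)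
    (hoA : 0 ≤ oA) (hoB : 0 ≤ oB)
    (ΔA ΔB : ℝ) (hΔA : ΔA = wl * qA - wp * oA) (hΔB : ΔB = wl * qB - wp * oB)
    (hsum : ΔA + ΔB ≤ 2) (hA : ΔA > 0) (hB : ΔB > 0)
    (pA pB : ℝ)
    (hpA : pA = (wp * oA + wl * qA) / (2 * wp))
    (hpB : pB = (wp * oB + wl * qB) / (2 * wp)) :
    (∀ p : ℝ, oA ≤ p →
      (pA - oA) * sigmaA wl wp qA qB pA pB ≥ (p - oA) * sigmaA wl wp qA qB p pB) ∧
    (∀ p : ℝ, oB ≤ p →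
      (pB - oB) * sigmaB wl wp qA qB pA pB ≥ (p - oB) * sigmaB wl wp qA qB pA p) := by
  have hwp' : wp ≠ 0 := ne_of_gt hwp
  have hδA : wl * qA - wp * pA = ΔA / 2 := by
    rw [hpA, hΔA]; field_simp; ring
  have hδB : wl * qB - wp * pB = ΔB / 2 := by
    rw [hpB, hΔB]; field_simp; ring
  have hpAoA : pA - oA = ΔA / (2 * wp) := by
    rw [hpA, hΔA]; field_simp; ring
  have hpBoB : pB - oB = ΔB / (2 * wp) := by
    rw [hpB, hΔB]; field_simp; ring
  -- equilibrium share of A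
  have hσA : sigmaA wl wp qA qB pA pB = ΔA / 2 := by
    unfold sigmaA
    have hset : {x : ℝ | x ∈ Set.Icc (0 : ℝ) 1 ∧
        (wl * qA - wp * pA) - x ≥ 0 ∧
        (wl * qA - wp * pA) - x ≥ (wl * qB - wp * pB) - (1 - x)} = Set.Icc 0 (ΔA / 2) := by
      ext x
      simp only [Set.mem_setOf_eq, Set.mem_Icc, hδA, hδB]
      constructor
      · rintro ⟨⟨hx0, _⟩, h1, _⟩; exact ⟨hx0, by linarith⟩
      · rintro ⟨hx0, hx1⟩
        refine ⟨⟨hx0, by linarith⟩, by linarith, by linarith⟩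
    rw [hset, Real.volume_Icc, ENNReal.toReal_ofReal (by linarith)]
    ring
  -- equilibrium share of B
  have hσB : sigmaB wl wp qA qB pA pB = ΔB / 2 := by
    unfold sigmaB
    set S := {x : ℝ | x ∈ Set.Icc (0 : ℝ) 1 ∧
        (wl * qB - wp * pB) - (1 - x) ≥ 0 ∧
        (wl * qB - wp * pB) - (1 - x) > (wl * qA - wp * pA) - x} with hS
    have hupper : S ⊆ Set.Icc (1 - ΔB / 2) 1 := by
      rintro x ⟨⟨_, hx1⟩, h1, _⟩
      rw [hδB] at h1
      exact ⟨by linarith, hx1⟩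
    have hlower : Set.Ioc (1 - ΔB / 2) 1 ⊆ S := by
      rintro x ⟨hx0, hx1⟩
      refine ⟨⟨by linarith, hx1⟩, ?_, ?_⟩
      · rw [hδB]; linarith
      · rw [hδA, hδB]; linarith
    have hvol : volume S = ENNReal.ofReal (ΔB / 2) := by
      apply le_antisymm
      · calc volume S ≤ volume (Set.Icc (1 - ΔB / 2) 1) := measure_mono hupper
          _ = ENNReal.ofReal (1 - (1 - ΔB / 2)) := Real.volume_Icc
          _ = ENNReal.ofReal (ΔB / 2) := by ring_nf
      · calc ENNReal.ofReal (ΔB / 2) = ENNReal.ofReal (1 - (1 - ΔB / 2)) := by ring_nf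
          _ = volume (Set.Ioc (1 - ΔB / 2) 1) := (Real.volume_Ioc).symm
          _ ≤ volume S := measure_mono hlower
    rw [hvol, ENNReal.toReal_ofReal (by linarith)]
  constructor
  · intro p hp
    have hdev : sigmaA wl wp qA qB p pB ≤ max 0 (wl * qA - wp * p) := by
      have hsub : {x : ℝ | x ∈ Set.Icc (0 : ℝ) 1 ∧
          (wl * qA - wp * p) - x ≥ 0 ∧
          (wl * qA - wp * p) - x ≥ (wl * qB - wp * pB) - (1 - x)} ⊆
          Set.Icc 0 (wl * qA - wp * p) := by
        rintro x ⟨⟨hx0, _⟩, h1, _⟩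
        exact ⟨hx0, by linarith⟩
      have := vol_toReal_le hsub
      simpa [sigmaA] using this
    rw [hσA, hpAoA]
    have hσnn : 0 ≤ sigmaA wl wp qA qB p pB := ENNReal.toReal_nonneg
    calc (p - oA) * sigmaA wl wp qA qB p pB
        ≤ (p - oA) * max 0 (wl * qA - wp * p) :=
          mul_le_mul_of_nonneg_left hdev (by linarith)
      _ ≤ ΔA / (2 * wp) * (ΔA / 2) := by
          rcases le_or_gt (wl * qA - wp * p) 0 with h | h
          · rw [max_eq_left h, mul_zero]
            positivity
          · rw [max_eq_right h.le, div_mul_div_comm, le_div_iff₀ (by positivity)]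
            nlinarith [sq_nonneg (ΔA - 2 * wp * (p - oA))]
  · intro p hp
    have hdev : sigmaB wl wp qA qB pA p ≤ max 0 (wl * qB - wp * p) := by
      have hsub : {x : ℝ | x ∈ Set.Icc (0 : ℝ) 1 ∧
          (wl * qB - wp * p) - (1 - x) ≥ 0 ∧
          (wl * qB - wp * p) - (1 - x) > (wl * qA - wp * pA) - x} ⊆
          Set.Icc (1 - (wl * qB - wp * p)) 1 := by
        rintro x ⟨⟨_, hx1⟩, h1, _⟩
        exact ⟨by linarith, hx1⟩
      have := vol_toReal_le hsub
      have heq : (1 : ℝ) - (1 - (wl * qB - wp * p)) = wl * qB - wp * p := by ring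
      rw [heq] at this
      simpa [sigmaB] using this
    rw [hσB, hpBoB]
    have hσnn : 0 ≤ sigmaB wl wp qA qB pA p := ENNReal.toReal_nonneg
    calc (p - oB) * sigmaB wl wp qA qB pA p
        ≤ (p - oB) * max 0 (wl * qB - wp * p) :=
          mul_le_mul_of_nonneg_left hdev (by linarith)
      _ ≤ ΔB / (2 * wp) * (ΔB / 2) := by
          rcases le_or_gt (wl * qB - wp * p) 0 with h | h
          · rw [max_eq_left h, mul_zero]
            positivity
          · rw [max_eq_right h.le, div_mul_div_comm, le_div_iff₀ (by positivity)]
            nlinarith [sq_nonneg (ΔB - 2 * wp * (p - oB))]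
end

section
/- (Monopoly pricing, moderate QoS) Suppose w_p·o/w_l < q ≤ (w_p·o + 2)/w_l, i.e., 0 < Δ ≤ 2 where Δ = w_l·q − w_p·o. Then the monopoly profit M(p) = (p − o)·max(min(w_l·q − w_p·p, 1), 0) is maximized over p ≥ o at p* = (w_p·o + w_l·q)/(2·w_p): for every p ≥ o, M(p*) ≥ M(p). -/
/-- Monopoly pricing, moderate QoS: if w_p·o/w_l < q ≤ (w_p·o + 2)/w_l
(i.e. 0 < Δ ≤ 2 with Δ = w_l·q − w_p·o), then the monopoly profit
M(p) = (p − o)·max(min(w_l·q − w_p·p, 1), 0) is maximized over p ≥ o at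
p* = (w_p·o + w_l·q)/(2 w_p). -/
theorem stmt_10 (wl wp q o : ℝ)
    (hwl : 0 < wl) (hwp : 0 < wp) (hq : 0 ≤ q) (ho : 0 ≤ o)
    (hlo : wp * o / wl < q) (hhi : q ≤ (wp * o + 2) / wl)
    (M : ℝ → ℝ) (hM : ∀ p, M p = (p - o) * max (min (wl * q - wp * p) 1) 0)
    (pstar : ℝ) (hp : pstar = (wp * o + wl * q) / (2 * wp)) :
    ∀ p : ℝ, o ≤ p → M p ≤ M pstar := by
  intro p hpo
  have hΔ0 : 0 < wl * q - wp * o := by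
    rw [div_lt_iff₀ hwl] at hlo; nlinarith
  have hΔ2 : wl * q - wp * o ≤ 2 := by
    rw [le_div_iff₀ hwl] at hhi; nlinarith
  set Δ : ℝ := wl * q - wp * o with hΔ
  have hps : M pstar = Δ ^ 2 / (4 * wp) := by
    rw [hM, hp]
    have h1 : wl * q - wp * ((wp * o + wl * q) / (2 * wp)) = Δ / 2 := by
      field_simp; ring
    have h2 : min (Δ / 2) 1 = Δ / 2 := min_eq_left (by linarith)
    have h3 : max (Δ / 2) 0 = Δ / 2 := max_eq_left (by linarith)
    rw [h1, h2, h3]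
    field_simp
    ring
  rw [hM p, hps]
  rcases le_or_gt (wl * q - wp * p) 0 with h | h
  · have h0 : max (min (wl * q - wp * p) 1) 0 = 0 :=
      max_eq_right (le_trans (min_le_left _ _) h)
    rw [h0, mul_zero]
    positivity
  · have hle : max (min (wl * q - wp * p) 1) 0 ≤ wl * q - wp * p :=
      max_le (min_le_left _ _) h.le
    have h1 : (p - o) * max (min (wl * q - wp * p) 1) 0 ≤ (p - o) * (wl * q - wp * p) :=
      mul_le_mul_of_nonneg_left hle (by linarith)
    have h2 : (p - o) * (wl * q - wp * p) ≤ Δ ^ 2 / (4 * wp) := by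
      rw [le_div_iff₀ (by positivity : (0:ℝ) < 4 * wp)]
      nlinarith [sq_nonneg (Δ - 2 * wp * (p - o))]
    linarith
end

section
/- (Monopoly pricing, high QoS) Suppose q ≥ (w_p·o + 2)/w_l, i.e., Δ ≥ 2 where Δ = w_l·q − w_p·o. Then the monopoly profit M(p) = (p − o)·max(min(w_l·q − w_p·p, 1), 0) is maximized over p ≥ o at p* = (w_l·q − 1)/w_p, and the maximal profit equals M(p*) = (Δ − 1)/w_p. -/
/-!
Write `t = w_l q - w_p p` for the demand intercept at price `p`, so that `w_p (p - o) = Δ - t` and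
`w_p M(p) = (Δ - t) · clamp(t)`. On `0 < t < 1` the gap to `Δ - 1` factors as
`(1 - t)(Δ - 1 - t)`, nonnegative once `Δ ≥ 2`; outside that range the bound is immediate.
The value `Δ - 1` is attained at `t = 1`, i.e. at `p = p*`.
-/

theorem sub_mul_max_min_le_sub_one {Δ t : ℝ} (hΔ : 2 ≤ Δ) :
    (Δ - t) * max (min t 1) 0 ≤ Δ - 1 := by
  rcases le_or_gt t 0 with ht0 | ht0
  · rw [max_eq_right (min_le_of_left_le ht0)]
    linarith
  rcases le_or_gt 1 t with ht1 | ht1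
  · rw [min_eq_right ht1, max_eq_left zero_le_one]
    linarith
  · rw [min_eq_left ht1.le, max_eq_left ht0.le]
    nlinarith [mul_nonneg (sub_nonneg.mpr ht1.le) (by linarith : (0 : ℝ) ≤ Δ - 1 - t)]

theorem stmt_11_general (wl wp q o : ℝ)
    (hwl : 0 < wl) (hwp : 0 < wp)
    (hhi : (wp * o + 2) / wl ≤ q)
    (Δ : ℝ) (hΔ : Δ = wl * q - wp * o)
    (M : ℝ → ℝ) (hM : ∀ p, M p = (p - o) * max (min (wl * q - wp * p) 1) 0)
    (pstar : ℝ) (hp : pstar = (wl * q - 1) / wp) :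
    (∀ p : ℝ, o ≤ p → M p ≤ M pstar) ∧ M pstar = (Δ - 1) / wp := by
  have hΔ2 : 2 ≤ Δ := by
    have := (div_le_iff₀ hwl).mp hhi
    linarith
  have hM' : ∀ p, M p = (Δ - (wl * q - wp * p)) * max (min (wl * q - wp * p) 1) 0 / wp := by
    intro p
    rw [hM, hΔ]
    field_simp
    ring
  have hdemand : wl * q - wp * pstar = 1 := by
    rw [hp]
    field_simp
    ring
  have hMstar : M pstar = (Δ - 1) / wp := by
    rw [hM', hdemand]
    norm_num
  refine ⟨fun p _ => ?_, hMstar⟩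
  rw [hMstar, hM']
  exact div_le_div_of_nonneg_right (sub_mul_max_min_le_sub_one hΔ2) hwp.le

/-- Monopoly pricing, high QoS: if q ≥ (w_p·o + 2)/w_l (i.e. Δ ≥ 2 with
Δ = w_l·q − w_p·o), then the monopoly profit M(p) = (p − o)·max(min(w_l·q − w_p·p, 1), 0)
is maximized over p ≥ o at p* = (w_l·q − 1)/w_p, and M(p*) = (Δ − 1)/w_p. -/
theorem stmt_11 (wl wp q o : ℝ)
    (hwl : 0 < wl) (hwp : 0 < wp) (hq : 0 ≤ q) (ho : 0 ≤ o)
    (hhi : (wp * o + 2) / wl ≤ q)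
    (Δ : ℝ) (hΔ : Δ = wl * q - wp * o)
    (M : ℝ → ℝ) (hM : ∀ p, M p = (p - o) * max (min (wl * q - wp * p) 1) 0)
    (pstar : ℝ) (hp : pstar = (wl * q - 1) / wp) :
    (∀ p : ℝ, o ≤ p → M p ≤ M pstar) ∧ M pstar = (Δ - 1) / wp :=
  stmt_11_general wl wp q o hwl hwp hhi Δ hΔ M hM pstar hp
end

section
/- (Equilibrium profit, bifurcated regime) Suppose Δ_A + Δ_B ≥ 3, |Δ_A − Δ_B| ≤ 3, Δ_A > 0 and Δ_B > 0, and let p*_A = o_A + 1/w_p + (Δ_A − Δ_B)/(3·w_p) and p*_B = o_B + 1/w_p + (Δ_B − Δ_A)/(3·w_p). Then σ_A(p*_A, p*_B) = 1/2 + (Δ_A − Δ_B)/6 and σ_B(p*_A, p*_B) = 1/2 + (Δ_B − Δ_A)/6, and each station's equilibrium revenue equals (p*_i − o_i)·σ_i(p*_A, p*_B) = (1/(2·w_p))·((Δ_i − Δ_{−i})/3 + 1)², where −i denotes the other station. -/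
open MeasureTheory

/-- Equilibrium profit, bifurcated regime: under Δ_A + Δ_B ≥ 3,
|Δ_A − Δ_B| ≤ 3, Δ_A > 0, Δ_B > 0, at the equilibrium prices the market shares are
σ_A = 1/2 + (Δ_A − Δ_B)/6, σ_B = 1/2 + (Δ_B − Δ_A)/6 and each station's equilibrium
revenue equals (1/(2 w_p))·((Δ_i − Δ_{−i})/3 + 1)². -/
theorem stmt_12 (wl wp qA qB oA oB : ℝ)
    (hwl : 0 < wl) (hwp : 0 < wp) (hqA : 0 ≤ qA) (hqB : 0 ≤ qB)
    (hoA : 0 ≤ oA) (hoB : 0 ≤ oB)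
    (ΔA ΔB : ℝ) (hΔA : ΔA = wl * qA - wp * oA) (hΔB : ΔB = wl * qB - wp * oB)
    (hsum : ΔA + ΔB ≥ 3) (hdiff : |ΔA - ΔB| ≤ 3) (hA : ΔA > 0) (hB : ΔB > 0)
    (pA pB : ℝ)
    (hpA : pA = oA + 1 / wp + (ΔA - ΔB) / (3 * wp))
    (hpB : pB = oB + 1 / wp + (ΔB - ΔA) / (3 * wp)) :
    sigmaA wl wp qA qB pA pB = 1 / 2 + (ΔA - ΔB) / 6 ∧
    sigmaB wl wp qA qB pA pB = 1 / 2 + (ΔB - ΔA) / 6 ∧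
    (pA - oA) * sigmaA wl wp qA qB pA pB = (1 / (2 * wp)) * ((ΔA - ΔB) / 3 + 1) ^ 2 ∧
    (pB - oB) * sigmaB wl wp qA qB pA pB = (1 / (2 * wp)) * ((ΔB - ΔA) / 3 + 1) ^ 2 := by
  have hwp' : wp ≠ 0 := ne_of_gt hwp
  have hd1 : ΔA - ΔB ≤ 3 := (abs_le.mp hdiff).2
  have hd2 : -(3:ℝ) ≤ ΔA - ΔB := (abs_le.mp hdiff).1
  have hwpA : wp * pA = wp * oA + 1 + (ΔA - ΔB) / 3 := by
    rw [hpA]; field_simp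
  have hwpB : wp * pB = wp * oB + 1 + (ΔB - ΔA) / 3 := by
    rw [hpB]; field_simp
  set t : ℝ := 1 / 2 + (ΔA - ΔB) / 6 with ht
  have ht0 : 0 ≤ t := by rw [ht]; linarith
  have ht1 : t ≤ 1 := by rw [ht]; linarith
  have hδA : wl * qA - wp * pA = ΔA - 1 - (ΔA - ΔB) / 3 := by
    rw [hΔA] at *; linarith [hwpA]
  have hδB : wl * qB - wp * pB = ΔB - 1 - (ΔB - ΔA) / 3 := by
    rw [hΔB] at *; linarith [hwpB]
  have hSA : {x : ℝ | x ∈ Set.Icc (0 : ℝ) 1 ∧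
      (wl * qA - wp * pA) - x ≥ 0 ∧
      (wl * qA - wp * pA) - x ≥ (wl * qB - wp * pB) - (1 - x)} = Set.Icc 0 t := by
    ext x
    simp only [Set.mem_Icc, Set.mem_setOf_eq, hδA, hδB, ht]
    constructor
    · rintro ⟨⟨h0, h1⟩, h2, h3⟩; constructor <;> linarith
    · rintro ⟨h0, h1⟩; refine ⟨⟨h0, by linarith⟩, by linarith, by linarith⟩
  have hSB : {x : ℝ | x ∈ Set.Icc (0 : ℝ) 1 ∧
      (wl * qB - wp * pB) - (1 - x) ≥ 0 ∧
      (wl * qB - wp * pB) - (1 - x) > (wl * qA - wp * pA) - x} = Set.Ioc t 1 := by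
    ext x
    simp only [Set.mem_Icc, Set.mem_Ioc, Set.mem_setOf_eq, hδA, hδB, ht]
    constructor
    · rintro ⟨⟨h0, h1⟩, h2, h3⟩; constructor <;> linarith
    · rintro ⟨h0, h1⟩; refine ⟨⟨by linarith, h1⟩, by linarith, by linarith⟩
  have hA' : sigmaA wl wp qA qB pA pB = t := by
    rw [sigmaA, hSA, Real.volume_Icc, ENNReal.toReal_ofReal (by linarith)]
    simp
  have hB' : sigmaB wl wp qA qB pA pB = 1 - t := by
    rw [sigmaB, hSB, Real.volume_Ioc, ENNReal.toReal_ofReal (by linarith)]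
  refine ⟨hA', by rw [hB', ht]; ring, ?_, ?_⟩
  · rw [hA', hpA, ht]; field_simp; ring
  · rw [hB', hpB, ht]; field_simp; ring
end

section
/- (Equilibrium profit, segmented regime) Suppose Δ_A + Δ_B ≤ 2, Δ_A > 0 and Δ_B > 0, and let p*_i = (w_p·o_i + w_l·q_i)/(2·w_p) for i ∈ {A, B}. Then σ_A(p*_A, p*_B) = Δ_A/2 and σ_B(p*_A, p*_B) = Δ_B/2, and each station's equilibrium revenue equals (p*_i − o_i)·σ_i(p*_A, p*_B) = Δ_i²/(4·w_p). -/
open MeasureTheory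

/-- Equilibrium profit, segmented regime: under Δ_A + Δ_B ≤ 2, Δ_A > 0,
Δ_B > 0, at the equilibrium prices p*_i = (w_p·o_i + w_l·q_i)/(2 w_p) the market shares
are σ_A = Δ_A/2 and σ_B = Δ_B/2, and each station's equilibrium revenue equals
Δ_i²/(4 w_p). -/
theorem stmt_13 (wl wp qA qB oA oB : ℝ)
    (hwl : 0 < wl) (hwp : 0 < wp) (hqA : 0 ≤ qA) (hqB : 0 ≤ qB)
    (hoA : 0 ≤ oA) (hoB : 0 ≤ oB)
    (ΔA ΔB : ℝ) (hΔA : ΔA = wl * qA - wp * oA) (hΔB : ΔB = wl * qB - wp * oB)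
    (hsum : ΔA + ΔB ≤ 2) (hA : ΔA > 0) (hB : ΔB > 0)
    (pA pB : ℝ)
    (hpA : pA = (wp * oA + wl * qA) / (2 * wp))
    (hpB : pB = (wp * oB + wl * qB) / (2 * wp)) :
    sigmaA wl wp qA qB pA pB = ΔA / 2 ∧
    sigmaB wl wp qA qB pA pB = ΔB / 2 ∧
    (pA - oA) * sigmaA wl wp qA qB pA pB = ΔA ^ 2 / (4 * wp) ∧
    (pB - oB) * sigmaB wl wp qA qB pA pB = ΔB ^ 2 / (4 * wp) := by

  have hwp' : wp ≠ 0 := ne_of_gt hwp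
  have hdA : wl * qA - wp * pA = ΔA / 2 := by
    rw [hpA, hΔA]; field_simp; ring
  have hdB : wl * qB - wp * pB = ΔB / 2 := by
    rw [hpB, hΔB]; field_simp; ring
  have hSA : sigmaA wl wp qA qB pA pB = ΔA / 2 := by
    unfold sigmaA
    have hset : {x : ℝ | x ∈ Set.Icc (0 : ℝ) 1 ∧
        (wl * qA - wp * pA) - x ≥ 0 ∧
        (wl * qA - wp * pA) - x ≥ (wl * qB - wp * pB) - (1 - x)}
        = Set.Icc (0 : ℝ) (ΔA / 2) := by
      ext x
      simp only [Set.mem_setOf_eq, Set.mem_Icc, hdA, hdB]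
      constructor
      · rintro ⟨⟨h1, h2⟩, h3, h4⟩; exact ⟨h1, by linarith⟩
      · rintro ⟨h1, h2⟩
        refine ⟨⟨h1, by linarith⟩, by linarith, by linarith⟩
    rw [hset, Real.volume_Icc, ENNReal.toReal_ofReal (by linarith)]
    ring
  have hSB : sigmaB wl wp qA qB pA pB = ΔB / 2 := by
    unfold sigmaB
    set S := {x : ℝ | x ∈ Set.Icc (0 : ℝ) 1 ∧
        (wl * qB - wp * pB) - (1 - x) ≥ 0 ∧
        (wl * qB - wp * pB) - (1 - x) > (wl * qA - wp * pA) - x} with hS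
    have hsub1 : Set.Ioc (1 - ΔB / 2) 1 ⊆ S := by
      intro x hx
      simp only [Set.mem_Ioc] at hx
      simp only [hS, Set.mem_setOf_eq, Set.mem_Icc, hdA, hdB]
      refine ⟨⟨by linarith, hx.2⟩, by linarith, by linarith [hx.1]⟩
    have hsub2 : S ⊆ Set.Icc (1 - ΔB / 2) 1 := by
      intro x hx
      simp only [hS, Set.mem_setOf_eq, Set.mem_Icc, hdA, hdB] at hx
      exact ⟨by linarith [hx.2.1], hx.1.2⟩
    have hvol : volume S = ENNReal.ofReal (ΔB / 2) := by
      apply le_antisymm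
      · calc volume S ≤ volume (Set.Icc (1 - ΔB / 2) 1) := measure_mono hsub2
          _ = ENNReal.ofReal (ΔB / 2) := by rw [Real.volume_Icc]; ring_nf
      · calc ENNReal.ofReal (ΔB / 2) = volume (Set.Ioc (1 - ΔB / 2) 1) := by
              rw [Real.volume_Ioc]; ring_nf
          _ ≤ volume S := measure_mono hsub1
    rw [hvol, ENNReal.toReal_ofReal (by linarith)]
  refine ⟨hSA, hSB, ?_, ?_⟩
  · rw [hSA]
    have : pA - oA = ΔA / (2 * wp) := by rw [hpA, hΔA]; field_simp; ring
    rw [this]; field_simp; ring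
  · rw [hSB]
    have : pB - oB = ΔB / (2 * wp) := by rw [hpB, hΔB]; field_simp; ring
    rw [this]; field_simp; ring
end

section
/- (FL participation by both stations is not always optimal) There exist parameters w_l > 0, w_p > 0, costs o_A, o_B ≥ 0, local QoS levels q_A, q_B ≥ 0, and FL QoS levels q̄_A > q_A and q̄_B > q_B, such that both (q_A, q_B) and (q̄_A, q̄_B) satisfy the bifurcated-regime conditions (Δ_A + Δ_B ≥ 3, |Δ_A − Δ_B| ≤ 3, Δ_A > 0, Δ_B > 0, where Δ_i is evaluated at the respective QoS), and yet station A's equilibrium revenue under the FL QoS levels is strictly smaller than its equilibrium revenue under the local QoS levels, i.e., (1/(2·w_p))·((Δ̄_A − Δ̄_B)/3 + 1)² < (1/(2·w_p))·((Δ_A − Δ_B)/3 + 1)². Hence, even with zero FL cost, federated learning that strictly improves both stations' QoS can strictly reduce a station's profit, so mutual FL participation (r_A·r_B = 1) is not always the optimal strategy. -/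
/-- FL participation by both stations is not always optimal: there exist
parameters w_l > 0, w_p > 0, costs o_A, o_B ≥ 0, local QoS levels q_A, q_B ≥ 0 and FL
QoS levels q̄_A > q_A, q̄_B > q_B such that both QoS profiles satisfy the
bifurcated-regime conditions, yet station A's equilibrium revenue
(1/(2 w_p))·((Δ_A − Δ_B)/3 + 1)² is strictly smaller with FL than without: even with
zero FL cost, FL that strictly improves both stations' QoS can strictly reduce a
station's profit, so mutual FL participation is not always optimal. -/
theorem stmt_19 :
    ∃ (wl wp oA oB qA qB qbA qbB : ℝ),
      0 < wl ∧ 0 < wp ∧ 0 ≤ oA ∧ 0 ≤ oB ∧ 0 ≤ qA ∧ 0 ≤ qB ∧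
      qA < qbA ∧ qB < qbB ∧
      -- bifurcated-regime conditions for the local QoS levels (q_A, q_B)
      ((wl * qA - wp * oA) + (wl * qB - wp * oB) ≥ 3 ∧
        |(wl * qA - wp * oA) - (wl * qB - wp * oB)| ≤ 3 ∧
        0 < wl * qA - wp * oA ∧ 0 < wl * qB - wp * oB) ∧
      -- bifurcated-regime conditions for the FL QoS levels (q̄_A, q̄_B)
      ((wl * qbA - wp * oA) + (wl * qbB - wp * oB) ≥ 3 ∧
        |(wl * qbA - wp * oA) - (wl * qbB - wp * oB)| ≤ 3 ∧
        0 < wl * qbA - wp * oA ∧ 0 < wl * qbB - wp * oB) ∧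
      -- station A's equilibrium revenue is strictly smaller with FL
      (1 / (2 * wp)) * (((wl * qbA - wp * oA) - (wl * qbB - wp * oB)) / 3 + 1) ^ 2 <
        (1 / (2 * wp)) * (((wl * qA - wp * oA) - (wl * qB - wp * oB)) / 3 + 1) ^ 2 := by
  refine ⟨1, 1, 0, 0, 2, 2, 5/2, 4, ?_⟩
  norm_num [abs_le]
end
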